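/- Approximation guarantee of the Sinkhorn-based OT scheme: let p, q ∈ S_n(1), assume ‖C‖_∞ > 0, fix ε > 0, and set ε' := ε/(8‖C‖_∞), γ := ε/(4 ln n), p̌ := (1 − ε'/8)(p + (ε'/(8n))·1) and q̌ := (1 − ε'/8)(q + (ε'/(8n))·1). Suppose u, v ∈ ℝ^n satisfy ‖B(u,v)·1 − p̌‖₁ + ‖B(u,v)^T·1 − q̌‖₁ ≤ ε'/2, and let π̂ be the output of the rounding procedure (P := diag(min(p_i/(π̌·1)_i, 1)), Q := diag(min(q_j/(π̌^T·1)_j, 1)), F := P π̌ Q, π̂ := F + (p − F·1)(q − F^T·1)^T/‖p − F·1‖₁) applied to π̌ := B(u,v) with marginals p, q. Then π̂ ∈ U(p,q) and ⟨C, π̂⟩ − min_{π ∈ U(p,q)} ⟨C, π⟩ ≤ ε. -/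

import Mathlib

/-!
Rounding (Altschuler–Weed–Rigollet) turns a nonnegative matrix `X` into a plan in `U(p, q)` at
extra cost at most `‖C‖_∞ (‖X 1 - p‖₁ + ‖Xᵀ 1 - q‖₁)`. The Gibbs matrix `B = B(u, v)` minimises
`⟨C, π⟩ + γ ∑ π log π` among matrices with its own marginals, and the entropy of a matrix of
mass `m` with `n²` entries lies in `[m log m - m log n², m log m]`. Rounding any `P ∈ U(p, q)`
onto the marginals of `B` thus gives `⟨C, π̂⟩ ≤ ⟨C, P⟩ + 2 ‖C‖_∞ Δ + γ m log n²`, where the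
marginal error `Δ` of `B` is at most `ε'` and its mass `m` at most `1 + ε' / 2` (the smoothing
costs `ε' / 4` per marginal). With `γ = ε / (4 log n)` the right side is at most `⟨C, P⟩ + ε`
when `ε' ≤ 1`; when `ε' > 1`, any two plans differ in cost by at most `‖C‖_∞ < ε / 8`.
-/

open Finset

/-- `B(u,v)ᵢⱼ = exp(uᵢ + vⱼ − Cᵢⱼ/γ)`. -/
noncomputable def Bmat (n : ℕ) (C : Matrix (Fin n) (Fin n) ℝ) (γ : ℝ)
    (u v : Fin n → ℝ) : Matrix (Fin n) (Fin n) ℝ :=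
  Matrix.of fun i j => Real.exp (u i + v j - C i j / γ)

namespace OptimalTransport

variable {ι κ : Type*} [Fintype ι] [Fintype κ]

def transportPlans (p : ι → ℝ) (q : κ → ℝ) : Set (Matrix ι κ ℝ) :=
  {π | (∀ i j, 0 ≤ π i j) ∧ (∀ i, ∑ j, π i j = p i) ∧ (∀ j, ∑ i, π i j = q j)}

def cost (C π : Matrix ι κ ℝ) : ℝ := ∑ i, ∑ j, C i j * π i j

noncomputable def negEntropy (π : Matrix ι κ ℝ) : ℝ := ∑ i, ∑ j, π i j * Real.log (π i j)

def marginalError (X : Matrix ι κ ℝ) (p : ι → ℝ) (q : κ → ℝ) : ℝ :=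
  ∑ i, |p i - ∑ j, X i j| + ∑ j, |q j - ∑ i, X i j|

noncomputable def roundDown (p : ι → ℝ) (q : κ → ℝ) (X : Matrix ι κ ℝ) : Matrix ι κ ℝ :=
  Matrix.of fun i j => min (p i / ∑ k, X i k) 1 * X i j * min (q j / ∑ k, X k j) 1

noncomputable def fillDeficit (p : ι → ℝ) (q : κ → ℝ) (F : Matrix ι κ ℝ) : Matrix ι κ ℝ :=
  Matrix.of fun i j =>
    F i j + (p i - ∑ j', F i j') * (q j - ∑ i', F i' j) / ∑ k, |p k - ∑ j', F k j'|

noncomputable def roundToPlan (p : ι → ℝ) (q : κ → ℝ) (X : Matrix ι κ ℝ) : Matrix ι κ ℝ :=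
  fillDeficit p q (roundDown p q X)

lemma cost_nonneg {C π : Matrix ι κ ℝ} (hC : ∀ i j, 0 ≤ C i j) (hπ : ∀ i j, 0 ≤ π i j) :
    0 ≤ cost C π :=
  sum_nonneg fun i _ => sum_nonneg fun j _ => mul_nonneg (hC i j) (hπ i j)

lemma cost_le_mul_sum_of_mem_transportPlans {C π : Matrix ι κ ℝ} {Cmax : ℝ} {p : ι → ℝ}
    {q : κ → ℝ} (hCmax : ∀ i j, C i j ≤ Cmax) (hπ : π ∈ transportPlans p q) :
    cost C π ≤ Cmax * ∑ i, p i := by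
  rw [mul_sum]
  refine sum_le_sum fun i _ => ?_
  rw [← hπ.2.1 i, mul_sum]
  exact sum_le_sum fun j _ => mul_le_mul_of_nonneg_right (hCmax i j) (hπ.1 i j)

lemma cost_le_cost_add_of_mem_transportPlans {C π P : Matrix ι κ ℝ} {Cmax : ℝ} {p : ι → ℝ}
    {q : κ → ℝ} (hC : ∀ i j, 0 ≤ C i j) (hCmax : ∀ i j, C i j ≤ Cmax) (hp : ∑ i, p i = 1)
    (hπ : π ∈ transportPlans p q) (hP : P ∈ transportPlans p q) :
    cost C π ≤ cost C P + Cmax := by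
  have := cost_le_mul_sum_of_mem_transportPlans hCmax hπ
  rw [hp, mul_one] at this
  linarith [cost_nonneg hC hP.1]

lemma sub_csInf_image_le {α : Type*} {f : α → ℝ} {s : Set α} {a : α} {ε : ℝ} (ha : a ∈ s)
    (h : ∀ b ∈ s, f a ≤ f b + ε) : f a - sInf (f '' s) ≤ ε := by
  refine sub_le_comm.1 (le_csInf ⟨_, a, ha, rfl⟩ ?_)
  rintro _ ⟨b, hb, rfl⟩
  linarith [h b hb]

section Rounding

lemma min_div_one_nonneg {a b : ℝ} (ha : 0 ≤ a) (hb : 0 ≤ b) : 0 ≤ min (a / b) 1 :=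
  le_min (div_nonneg ha hb) zero_le_one

lemma min_div_one_mul_self {a b : ℝ} (ha : 0 ≤ a) (hb : 0 ≤ b) : min (a / b) 1 * b = min a b := by
  rcases hb.eq_or_lt with rfl | hb
  · simp [ha]
  · rw [min_mul_of_nonneg _ _ hb.le, div_mul_cancel₀ _ hb.ne', one_mul]

lemma sub_min_le_abs_sub (a b : ℝ) : a - min a b ≤ |a - b| := by
  rcases le_total a b with h | h
  · simp [h]
  · simp [h, le_abs_self]

variable {p : ι → ℝ} {q : κ → ℝ} {X : Matrix ι κ ℝ}

lemma roundDown_apply (i : ι) (j : κ) :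
    roundDown p q X i j = min (p i / ∑ k, X i k) 1 * X i j * min (q j / ∑ k, X k j) 1 :=
  rfl

lemma roundDown_nonneg (hp : ∀ i, 0 ≤ p i) (hq : ∀ j, 0 ≤ q j) (hX : ∀ i j, 0 ≤ X i j)
    (i : ι) (j : κ) : 0 ≤ roundDown p q X i j :=
  mul_nonneg (mul_nonneg (min_div_one_nonneg (hp i) (sum_nonneg fun k _ => hX i k)) (hX i j))
    (min_div_one_nonneg (hq j) (sum_nonneg fun k _ => hX k j))

lemma roundDown_le (hp : ∀ i, 0 ≤ p i) (hX : ∀ i j, 0 ≤ X i j) (i : ι) (j : κ) :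
    roundDown p q X i j ≤ X i j := by
  have ha : 0 ≤ min (p i / ∑ k, X i k) 1 := min_div_one_nonneg (hp i) (sum_nonneg fun k _ => hX i k)
  calc roundDown p q X i j ≤ min (p i / ∑ k, X i k) 1 * X i j :=
        mul_le_of_le_one_right (mul_nonneg ha (hX i j)) (min_le_right _ _)
    _ ≤ X i j := mul_le_of_le_one_left (hX i j) (min_le_right _ _)

lemma sum_roundDown_row_le_min (hp : ∀ i, 0 ≤ p i) (hX : ∀ i j, 0 ≤ X i j)
    (i : ι) : ∑ j, roundDown p q X i j ≤ min (p i) (∑ j, X i j) := by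
  have hr : 0 ≤ ∑ j, X i j := sum_nonneg fun k _ => hX i k
  calc ∑ j, roundDown p q X i j ≤ ∑ j, min (p i / ∑ k, X i k) 1 * X i j :=
        sum_le_sum fun j _ => mul_le_of_le_one_right
          (mul_nonneg (min_div_one_nonneg (hp i) hr) (hX i j)) (min_le_right _ _)
    _ = min (p i) (∑ j, X i j) := by rw [← mul_sum, min_div_one_mul_self (hp i) hr]

lemma sum_roundDown_col_le_min (hq : ∀ j, 0 ≤ q j) (hX : ∀ i j, 0 ≤ X i j)
    (j : κ) : ∑ i, roundDown p q X i j ≤ min (q j) (∑ i, X i j) := by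
  have hc : 0 ≤ ∑ i, X i j := sum_nonneg fun k _ => hX k j
  calc ∑ i, roundDown p q X i j ≤ ∑ i, X i j * min (q j / ∑ k, X k j) 1 :=
        sum_le_sum fun i _ => mul_le_mul_of_nonneg_right
          (mul_le_of_le_one_left (hX i j) (min_le_right _ _)) (min_div_one_nonneg (hq j) hc)
    _ = min (q j) (∑ i, X i j) := by rw [← sum_mul, mul_comm, min_div_one_mul_self (hq j) hc]

/-- `a x b ≥ a x + x b - x` for `a, b ∈ [0, 1]` and `x ≥ 0`. -/
lemma sum_sub_sum_roundDown_le (hp : ∀ i, 0 ≤ p i) (hq : ∀ j, 0 ≤ q j)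
    (hX : ∀ i j, 0 ≤ X i j) :
    ∑ i, (p i - ∑ j, roundDown p q X i j) ≤ marginalError X p q := by
  set a : ι → ℝ := fun i => min (p i / ∑ k, X i k) 1
  set b : κ → ℝ := fun j => min (q j / ∑ k, X k j) 1
  have hmass : ∑ i, min (p i) (∑ j, X i j) + ∑ j, min (q j) (∑ i, X i j) - ∑ i, ∑ j, X i j
      ≤ ∑ i, ∑ j, roundDown p q X i j := by
    have hrow : ∀ i, min (p i) (∑ j, X i j) = ∑ j, a i * X i j := fun i => by
      rw [← mul_sum, min_div_one_mul_self (hp i) (sum_nonneg fun k _ => hX i k)]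
    have hcol : ∀ j, min (q j) (∑ i, X i j) = ∑ i, X i j * b j := fun j => by
      rw [← sum_mul, mul_comm, min_div_one_mul_self (hq j) (sum_nonneg fun k _ => hX k j)]
    calc _ = ∑ i, ∑ j, a i * X i j + ∑ i, ∑ j, X i j * b j - ∑ i, ∑ j, X i j := by
          simp only [hrow, hcol]
          rw [sum_comm (f := fun j i => X i j * b j)]
      _ = ∑ i, ∑ j, (a i * X i j + X i j * b j - X i j) := by
          simp only [sum_sub_distrib, sum_add_distrib]
      _ ≤ ∑ i, ∑ j, roundDown p q X i j := by
          gcongr with i _ j _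
          have ha : a i ≤ 1 := min_le_right _ _
          have hb : b j ≤ 1 := min_le_right _ _
          have := mul_nonneg (mul_nonneg (sub_nonneg.2 ha) (sub_nonneg.2 hb)) (hX i j)
          rw [roundDown_apply]
          linarith
  have hrow : ∑ i, (p i - min (p i) (∑ j, X i j)) ≤ ∑ i, |p i - ∑ j, X i j| :=
    sum_le_sum fun i _ => sub_min_le_abs_sub _ _
  have hcol : ∑ j, (∑ i, X i j - min (q j) (∑ i, X i j)) ≤ ∑ j, |q j - ∑ i, X i j| :=
    sum_le_sum fun j _ => by rw [min_comm, abs_sub_comm]; exact sub_min_le_abs_sub _ _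
  have hswap : ∑ i, ∑ j, X i j = ∑ j, ∑ i, X i j := sum_comm
  simp only [sum_sub_distrib] at hrow hcol ⊢
  unfold marginalError
  linarith

lemma mul_sum_div_sum_self {u : ι → ℝ} (hu : ∀ k, 0 ≤ u k) (i : ι) :
    u i * (∑ k, u k) / ∑ k, u k = u i := by
  by_cases hs : ∑ k, u k = 0
  · simp [(sum_eq_zero_iff_of_nonneg fun k _ => hu k).1 hs i]
  · field_simp

variable {F : Matrix ι κ ℝ}

lemma fillDeficit_apply_of_le (hrow : ∀ i, ∑ j, F i j ≤ p i) (i : ι) (j : κ) :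
    fillDeficit p q F i j =
      F i j + (p i - ∑ j', F i j') * (q j - ∑ i', F i' j) / ∑ k, (p k - ∑ j', F k j') := by
  simp only [fillDeficit, Matrix.of_apply, abs_of_nonneg (sub_nonneg.2 (hrow _))]

lemma sum_sub_sum_eq_sum_sub_sum (hpq : ∑ i, p i = ∑ j, q j) :
    ∑ i, (p i - ∑ j, F i j) = ∑ j, (q j - ∑ i, F i j) := by
  rw [sum_sub_distrib, sum_sub_distrib, hpq, sum_comm]

lemma fillDeficit_mem_transportPlans (hF : ∀ i j, 0 ≤ F i j) (hrow : ∀ i, ∑ j, F i j ≤ p i)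
    (hcol : ∀ j, ∑ i, F i j ≤ q j) (hpq : ∑ i, p i = ∑ j, q j) :
    fillDeficit p q F ∈ transportPlans p q := by
  have hu : ∀ i, 0 ≤ p i - ∑ j, F i j := fun i => sub_nonneg.2 (hrow i)
  have hw : ∀ j, 0 ≤ q j - ∑ i, F i j := fun j => sub_nonneg.2 (hcol j)
  have hs := sum_sub_sum_eq_sum_sub_sum (F := F) hpq
  refine ⟨fun i j => ?_, fun i => ?_, fun j => ?_⟩
  · rw [fillDeficit_apply_of_le hrow]
    exact add_nonneg (hF i j) (div_nonneg (mul_nonneg (hu i) (hw j)) (sum_nonneg fun k _ => hu k))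
  · simp only [fillDeficit_apply_of_le hrow, sum_add_distrib, ← sum_div, ← mul_sum]
    rw [← hs, mul_sum_div_sum_self hu]
    ring
  · simp only [fillDeficit_apply_of_le hrow, sum_add_distrib, ← sum_div, ← sum_mul]
    rw [hs, mul_comm, mul_sum_div_sum_self hw]
    ring

lemma cost_fillDeficit_le {C : Matrix ι κ ℝ} {Cmax : ℝ} (hCmax : ∀ i j, C i j ≤ Cmax)
    (hrow : ∀ i, ∑ j, F i j ≤ p i) (hcol : ∀ j, ∑ i, F i j ≤ q j) (hpq : ∑ i, p i = ∑ j, q j) :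
    cost C (fillDeficit p q F) ≤ cost C F + Cmax * ∑ i, (p i - ∑ j, F i j) := by
  set u : ι → ℝ := fun i => p i - ∑ j, F i j
  set w : κ → ℝ := fun j => q j - ∑ i, F i j
  have hu : ∀ i, 0 ≤ u i := fun i => sub_nonneg.2 (hrow i)
  have hw : ∀ j, 0 ≤ w j := fun j => sub_nonneg.2 (hcol j)
  have hs : ∑ i, u i = ∑ j, w j := sum_sub_sum_eq_sum_sub_sum hpq
  calc cost C (fillDeficit p q F)
      = cost C F + ∑ i, ∑ j, C i j * (u i * w j / ∑ k, u k) := by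
        simp only [cost, fillDeficit_apply_of_le hrow, mul_add, sum_add_distrib]
        rfl
    _ ≤ cost C F + ∑ i, ∑ j, Cmax * (u i * w j / ∑ k, u k) := by
        gcongr with i _ j _
        · exact div_nonneg (mul_nonneg (hu i) (hw j)) (sum_nonneg fun k _ => hu k)
        · exact hCmax i j
    _ = cost C F + Cmax * ∑ i, u i := by
        simp only [← mul_sum, ← sum_div, ← sum_mul, ← hs, mul_self_div_self]

lemma roundToPlan_mem_transportPlans (hp : ∀ i, 0 ≤ p i) (hq : ∀ j, 0 ≤ q j)
    (hX : ∀ i j, 0 ≤ X i j) (hpq : ∑ i, p i = ∑ j, q j) :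
    roundToPlan p q X ∈ transportPlans p q :=
  fillDeficit_mem_transportPlans (roundDown_nonneg hp hq hX)
    (fun i => (sum_roundDown_row_le_min hp hX i).trans (min_le_left _ _))
    (fun j => (sum_roundDown_col_le_min hq hX j).trans (min_le_left _ _)) hpq

lemma cost_roundToPlan_le {C : Matrix ι κ ℝ} {Cmax : ℝ} (hC : ∀ i j, 0 ≤ C i j)
    (hCmax : ∀ i j, C i j ≤ Cmax) (hCmax₀ : 0 ≤ Cmax) (hp : ∀ i, 0 ≤ p i) (hq : ∀ j, 0 ≤ q j)
    (hX : ∀ i j, 0 ≤ X i j) (hpq : ∑ i, p i = ∑ j, q j) :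
    cost C (roundToPlan p q X) ≤ cost C X + Cmax * marginalError X p q :=
  calc cost C (roundToPlan p q X)
      ≤ cost C (roundDown p q X) + Cmax * ∑ i, (p i - ∑ j, roundDown p q X i j) :=
        cost_fillDeficit_le hCmax (fun i => (sum_roundDown_row_le_min hp hX i).trans (min_le_left _ _))
          (fun j => (sum_roundDown_col_le_min hq hX j).trans (min_le_left _ _)) hpq
    _ ≤ cost C X + Cmax * marginalError X p q := by
        gcongr ?_ + Cmax * ?_
        · exact sum_le_sum fun i _ => sum_le_sum fun j _ =>
            mul_le_mul_of_nonneg_left (roundDown_le hp hX i j) (hC i j)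
        · exact sum_sub_sum_roundDown_le hp hq hX

end Rounding

section Entropy

lemma mul_log_le_mul_log_add_sub {x y : ℝ} (hx : 0 < x) (hy : 0 ≤ y) :
    y * Real.log x ≤ y * Real.log y + (x - y) := by
  rcases hy.eq_or_lt with rfl | hy
  · simpa using hx.le
  · have h := mul_le_mul_of_nonneg_left (Real.log_le_sub_one_of_pos (div_pos hx hy)) hy.le
    rw [Real.log_div hx.ne' hy.ne', mul_sub, mul_sub, mul_div_cancel₀ _ hy.ne'] at h
    linarith

lemma sum_sum_mul_log_le {X Y : Matrix ι κ ℝ} (hX : ∀ i j, 0 < X i j) (hY : ∀ i j, 0 ≤ Y i j) :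
    ∑ i, ∑ j, Y i j * Real.log (X i j)
      ≤ negEntropy Y + (∑ i, ∑ j, X i j - ∑ i, ∑ j, Y i j) := by
  simp only [negEntropy, ← sum_sub_distrib, ← sum_add_distrib]
  gcongr with i _ j _
  exact mul_log_le_mul_log_add_sub (hX i j) (hY i j)

lemma eq_zero_of_sum_sum_eq_zero {X : Matrix ι κ ℝ} (hX : ∀ i j, 0 ≤ X i j)
    (h : ∑ i, ∑ j, X i j = 0) (i : ι) (j : κ) : X i j = 0 := by
  have hi := (sum_eq_zero_iff_of_nonneg fun i _ => sum_nonneg fun j _ => hX i j).1 h i (mem_univ i)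
  exact (sum_eq_zero_iff_of_nonneg fun j _ => hX i j).1 hi j (mem_univ j)

lemma negEntropy_le_mul_log_sum {Y : Matrix ι κ ℝ} (hY : ∀ i j, 0 ≤ Y i j) :
    negEntropy Y ≤ (∑ i, ∑ j, Y i j) * Real.log (∑ i, ∑ j, Y i j) := by
  set m := ∑ i, ∑ j, Y i j
  have hle : ∀ i j, Y i j ≤ m := fun i j =>
    (single_le_sum (fun j _ => hY i j) (mem_univ j)).trans
      (single_le_sum (f := fun i => ∑ j, Y i j) (fun i _ => sum_nonneg fun j _ => hY i j)
        (mem_univ i))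
  calc negEntropy Y ≤ ∑ i, ∑ j, Y i j * Real.log m := by
        refine sum_le_sum fun i _ => sum_le_sum fun j _ => ?_
        rcases (hY i j).eq_or_lt with h | h
        · simp [← h]
        · exact mul_le_mul_of_nonneg_left (Real.log_le_log h (hle i j)) h.le
    _ = m * Real.log m := by simp only [← sum_mul, m]

/-- Gibbs' inequality against the constant matrix of the same mass. -/
lemma mul_log_sub_le_negEntropy {X : Matrix ι κ ℝ} (hX : ∀ i j, 0 ≤ X i j) :
    (∑ i, ∑ j, X i j) * Real.log (∑ i, ∑ j, X i j)
      - (∑ i, ∑ j, X i j) * Real.log (Fintype.card ι * Fintype.card κ) ≤ negEntropy X := by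
  rcases (sum_nonneg fun i _ => sum_nonneg fun j _ => hX i j :
      0 ≤ ∑ i, ∑ j, X i j).eq_or_lt with hm | hm
  · simp [negEntropy, eq_zero_of_sum_sum_eq_zero hX hm.symm]
  obtain ⟨i, -, hi⟩ := exists_ne_zero_of_sum_ne_zero hm.ne'
  obtain ⟨j, -, -⟩ := exists_ne_zero_of_sum_ne_zero hi
  have hN : (0 : ℝ) < Fintype.card ι * Fintype.card κ := by
    have := Fintype.card_pos_iff.2 ⟨i⟩
    have := Fintype.card_pos_iff.2 ⟨j⟩
    positivity
  have h := sum_sum_mul_log_le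
    (X := fun _ _ => (∑ i, ∑ j, X i j) / (Fintype.card ι * Fintype.card κ))
    (fun _ _ => div_pos hm hN) hX
  simp only [← sum_mul, sum_const, card_univ, nsmul_eq_mul] at h
  rw [Real.log_div hm.ne' hN.ne', mul_div_cancel₀ _ hN.ne', sub_self, add_zero, mul_sub] at h
  exact h

lemma negEntropy_sub_negEntropy_le {X Y : Matrix ι κ ℝ} (hX : ∀ i j, 0 ≤ X i j)
    (hY : ∀ i j, 0 ≤ Y i j) (hYX : ∑ i, ∑ j, Y i j = ∑ i, ∑ j, X i j) :
    negEntropy Y - negEntropy X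
      ≤ (∑ i, ∑ j, X i j) * Real.log (Fintype.card ι * Fintype.card κ) := by
  have := negEntropy_le_mul_log_sum hY
  have := mul_log_sub_le_negEntropy hX
  rw [hYX] at *
  linarith

end Entropy

lemma sum_sum_add_mul_eq_of_sum_eq {X Y : Matrix ι κ ℝ} (u : ι → ℝ) (v : κ → ℝ)
    (hrow : ∀ i, ∑ j, X i j = ∑ j, Y i j) (hcol : ∀ j, ∑ i, X i j = ∑ i, Y i j) :
    ∑ i, ∑ j, (u i + v j) * X i j = ∑ i, ∑ j, (u i + v j) * Y i j := by
  have expand : ∀ Z : Matrix ι κ ℝ,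
      ∑ i, ∑ j, (u i + v j) * Z i j = ∑ i, u i * ∑ j, Z i j + ∑ j, v j * ∑ i, Z i j := by
    intro Z
    simp only [add_mul, sum_add_distrib, mul_sum]
    rw [sum_comm (f := fun i j => v j * Z i j)]
  rw [expand, expand]
  simp only [hrow, hcol]

section Gibbs

variable {n : ℕ} {C : Matrix (Fin n) (Fin n) ℝ} {γ : ℝ} {u v : Fin n → ℝ}

lemma Bmat_pos (i j : Fin n) : 0 < Bmat n C γ u v i j := Real.exp_pos _

lemma cost_eq_of_Bmat (hγ : γ ≠ 0) (Z : Matrix (Fin n) (Fin n) ℝ) :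
    cost C Z = γ * (∑ i, ∑ j, (u i + v j) * Z i j
      - ∑ i, ∑ j, Z i j * Real.log (Bmat n C γ u v i j)) := by
  simp only [cost, Bmat, Matrix.of_apply, Real.log_exp, mul_sum, ← sum_sub_distrib]
  refine sum_congr rfl fun i _ => sum_congr rfl fun j _ => ?_
  field_simp
  ring

/-- On matrices with the marginals of `B(u, v)` the dual term `∑ (uᵢ + vⱼ) πᵢⱼ` is constant,
so this is Gibbs' inequality. -/
lemma cost_Bmat_le (hγ : 0 < γ) {Y : Matrix (Fin n) (Fin n) ℝ} (hY : ∀ i j, 0 ≤ Y i j)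
    (hrow : ∀ i, ∑ j, Bmat n C γ u v i j = ∑ j, Y i j)
    (hcol : ∀ j, ∑ i, Bmat n C γ u v i j = ∑ i, Y i j) :
    cost C (Bmat n C γ u v)
      ≤ cost C Y + γ * (negEntropy Y - negEntropy (Bmat n C γ u v)) := by
  have hgibbs := sum_sum_mul_log_le (X := Bmat n C γ u v) Bmat_pos hY
  rw [sum_congr rfl fun i _ => hrow i, sub_self, add_zero] at hgibbs
  rw [cost_eq_of_Bmat hγ.ne', cost_eq_of_Bmat hγ.ne', sum_sum_add_mul_eq_of_sum_eq u v hrow hcol]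
  have := mul_le_mul_of_nonneg_left hgibbs hγ.le
  unfold negEntropy at *
  linarith

lemma cost_roundToPlan_Bmat_le {Cmax : ℝ} {p q : Fin n → ℝ} {P : Matrix (Fin n) (Fin n) ℝ}
    (hγ : 0 < γ) (hC : ∀ i j, 0 ≤ C i j) (hCmax : ∀ i j, C i j ≤ Cmax) (hCmax₀ : 0 ≤ Cmax)
    (hp : ∀ i, 0 ≤ p i) (hq : ∀ j, 0 ≤ q j) (hpq : ∑ i, p i = ∑ j, q j)
    (hP : P ∈ transportPlans p q) :
    cost C (roundToPlan p q (Bmat n C γ u v))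
      ≤ cost C P + 2 * Cmax * marginalError (Bmat n C γ u v) p q
        + γ * ((∑ i, ∑ j, Bmat n C γ u v i j) * Real.log (n * n)) := by
  set B := Bmat n C γ u v
  have hB : ∀ i j, 0 ≤ B i j := fun i j => (Bmat_pos i j).le
  set Q := roundToPlan (fun i => ∑ j, B i j) (fun j => ∑ i, B i j) P
  have hQ : Q ∈ transportPlans (fun i => ∑ j, B i j) (fun j => ∑ i, B i j) :=
    roundToPlan_mem_transportPlans (fun i => sum_nonneg fun j _ => hB i j)
      (fun j => sum_nonneg fun i _ => hB i j) hP.1 sum_comm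
  have hQP : cost C Q ≤ cost C P + Cmax * marginalError B p q := by
    have h := cost_roundToPlan_le hC hCmax hCmax₀ (fun i => sum_nonneg fun j _ => hB i j)
      (fun j => sum_nonneg fun i _ => hB i j) hP.1 sum_comm
    simpa only [marginalError, hP.2.1, hP.2.2, abs_sub_comm] using h
  have hBQ : cost C B ≤ cost C Q + γ * (negEntropy Q - negEntropy B) :=
    cost_Bmat_le hγ hQ.1 (fun i => (hQ.2.1 i).symm) (fun j => (hQ.2.2 j).symm)
  have hent := negEntropy_sub_negEntropy_le hB hQ.1 (sum_congr rfl fun i _ => hQ.2.1 i)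
  simp only [Fintype.card_fin] at hent
  have hround := cost_roundToPlan_le hC hCmax hCmax₀ hp hq hB hpq
  have := mul_le_mul_of_nonneg_left hent hγ.le
  linarith

end Gibbs

section Smoothing

variable {p : ι → ℝ}

lemma sum_sum_le_sum_add_sum_abs (X : Matrix ι κ ℝ) (p' : ι → ℝ) :
    ∑ i, ∑ j, X i j ≤ ∑ i, p' i + ∑ i, |∑ j, X i j - p' i| := by
  have := sum_le_sum fun i (_ : i ∈ univ) => le_abs_self (∑ j, X i j - p' i)
  rw [sum_sub_distrib] at this
  linarith

lemma marginalError_le (X : Matrix ι κ ℝ) (p p' : ι → ℝ) (q q' : κ → ℝ) :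
    marginalError X p q ≤ (∑ i, |∑ j, X i j - p' i| + ∑ j, |∑ i, X i j - q' j|)
      + (∑ i, |p i - p' i| + ∑ j, |q j - q' j|) := by
  have key : ∀ a a' b : ℝ, |a - b| ≤ |b - a'| + |a - a'| := fun a a' b => by
    rw [abs_sub_comm b]; exact (abs_sub_le a a' b).trans_eq (add_comm _ _)
  have hp := sum_le_sum fun i (_ : i ∈ univ) => key (p i) (p' i) (∑ j, X i j)
  have hq := sum_le_sum fun j (_ : j ∈ univ) => key (q j) (q' j) (∑ i, X i j)
  simp only [sum_add_distrib] at hp hq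
  unfold marginalError
  linarith

/-- The paper's `p̌` is `smooth (ε' / 8) p`. -/
noncomputable def smooth (a : ℝ) (p : ι → ℝ) : ι → ℝ :=
  fun i => (1 - a) * (p i + a / Fintype.card ι)

lemma card_ne_zero_of_sum_eq_one (hp : ∑ i, p i = 1) : (Fintype.card ι : ℝ) ≠ 0 := by
  obtain ⟨i⟩ := univ_nonempty_iff.1 (nonempty_of_sum_ne_zero (hp ▸ one_ne_zero))
  exact_mod_cast (Fintype.card_pos_iff.2 ⟨i⟩).ne'

lemma sum_smooth (a : ℝ) (hp : ∑ i, p i = 1) : ∑ i, smooth a p i = (1 - a) * (1 + a) := by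
  simp only [smooth, ← mul_sum, sum_add_distrib, hp, sum_const, card_univ, nsmul_eq_mul,
    mul_div_cancel₀ _ (card_ne_zero_of_sum_eq_one hp)]

lemma sum_abs_sub_smooth_le {a : ℝ} (hp : ∀ i, 0 ≤ p i) (hp₁ : ∑ i, p i = 1) (ha₀ : 0 ≤ a)
    (ha₁ : a ≤ 1) : ∑ i, |p i - smooth a p i| ≤ 2 * a := by
  have hN := card_ne_zero_of_sum_eq_one hp₁
  calc ∑ i, |p i - smooth a p i|
      ≤ ∑ i, (a * p i + (1 - a) * (a / Fintype.card ι)) := by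
        refine sum_le_sum fun i _ => ?_
        rw [show p i - smooth a p i = a * p i - (1 - a) * (a / Fintype.card ι) by
          simp only [smooth]; ring]
        refine (abs_sub _ _).trans_eq ?_
        rw [abs_of_nonneg (mul_nonneg ha₀ (hp i)),
          abs_of_nonneg (mul_nonneg (sub_nonneg.2 ha₁) (div_nonneg ha₀ (Nat.cast_nonneg _)))]
    _ = a + (1 - a) * a := by
        rw [sum_add_distrib, ← mul_sum, hp₁, sum_const, card_univ, nsmul_eq_mul]
        field_simp
    _ ≤ 2 * a := by nlinarith

variable {q : κ → ℝ} {X : Matrix ι κ ℝ} {a δ : ℝ}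

lemma marginalError_le_of_smooth (hp : ∀ i, 0 ≤ p i) (hp₁ : ∑ i, p i = 1) (hq : ∀ j, 0 ≤ q j)
    (hq₁ : ∑ j, q j = 1) (ha₀ : 0 ≤ a) (ha₁ : a ≤ 1)
    (hX : ∑ i, |∑ j, X i j - smooth a p i| + ∑ j, |∑ i, X i j - smooth a q j| ≤ δ) :
    marginalError X p q ≤ δ + 4 * a := by
  linarith [marginalError_le X p (smooth a p) q (smooth a q),
    sum_abs_sub_smooth_le hp hp₁ ha₀ ha₁, sum_abs_sub_smooth_le hq hq₁ ha₀ ha₁]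

lemma sum_sum_le_of_smooth (hp₁ : ∑ i, p i = 1)
    (hX : ∑ i, |∑ j, X i j - smooth a p i| + ∑ j, |∑ i, X i j - smooth a q j| ≤ δ) :
    ∑ i, ∑ j, X i j ≤ 1 + δ := by
  have := sum_sum_le_sum_add_sum_abs X (smooth a p)
  rw [sum_smooth a hp₁] at this
  nlinarith [sq_nonneg a, sum_nonneg fun j (_ : j ∈ univ) => abs_nonneg (∑ i, X i j - smooth a q j)]

end Smoothing

end OptimalTransport

open OptimalTransport

/-- approximation guarantee of the Sinkhorn-based OT scheme: if the
regularized dual iterate is accurate enough for the smoothed marginals, then the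
rounded plan is feasible and `ε`-optimal for the original OT problem. -/
theorem sinkhorn_scheme_approximation_guarantee
    (n : ℕ) (hn : 2 ≤ n) (C : Matrix (Fin n) (Fin n) ℝ)
    (hC : ∀ i j, 0 ≤ C i j)
    (Cmax : ℝ) (hCmax : Cmax = sSup (Set.range fun ij : Fin n × Fin n => C ij.1 ij.2))
    (hCmaxpos : 0 < Cmax)
    (p q : Fin n → ℝ)
    (hp : (∀ i, 0 ≤ p i) ∧ ∑ i, p i = 1)
    (hq : (∀ i, 0 ≤ q i) ∧ ∑ i, q i = 1)
    (ε ε' γ : ℝ) (hε : 0 < ε)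
    (hε' : ε' = ε / (8 * Cmax))
    (hγ : γ = ε / (4 * Real.log n))
    (pch qch : Fin n → ℝ)
    (hpch : pch = fun i => (1 - ε' / 8) * (p i + ε' / (8 * n)))
    (hqch : qch = fun i => (1 - ε' / 8) * (q i + ε' / (8 * n)))
    (u v : Fin n → ℝ)
    (hclose : (∑ i, |(∑ j, Bmat n C γ u v i j) - pch i|)
        + (∑ j, |(∑ i, Bmat n C γ u v i j) - qch j|) ≤ ε' / 2)
    (πch : Matrix (Fin n) (Fin n) ℝ) (hπch : πch = Bmat n C γ u v)
    (F : Matrix (Fin n) (Fin n) ℝ)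
    (hF : F = Matrix.of fun i j =>
      min (p i / ∑ k, πch i k) 1 * πch i j * min (q j / ∑ k, πch k j) 1)
    (πhat : Matrix (Fin n) (Fin n) ℝ)
    (hπhat : πhat = Matrix.of fun i j =>
      F i j + (p i - ∑ j', F i j') * (q j - ∑ i', F i' j) / ∑ k, |p k - ∑ j', F k j'|) :
    ((∀ i j, 0 ≤ πhat i j) ∧ (∀ i, ∑ j, πhat i j = p i) ∧ (∀ j, ∑ i, πhat i j = q j)) ∧
    (∑ i, ∑ j, C i j * πhat i j)
      - sInf ((fun π : Matrix (Fin n) (Fin n) ℝ => ∑ i, ∑ j, C i j * π i j) ''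
          {π | (∀ i j, 0 ≤ π i j) ∧ (∀ i, ∑ j, π i j = p i) ∧ (∀ j, ∑ i, π i j = q j)})
      ≤ ε := by
  obtain rfl : πhat = roundToPlan p q πch := by rw [hπhat, hF]; rfl
  subst hπch
  have hCle : ∀ i j, C i j ≤ Cmax := fun i j =>
    hCmax ▸ le_csSup (Set.finite_range _).bddAbove ⟨(i, j), rfl⟩
  have hpq : ∑ i, p i = ∑ j, q j := hp.2.trans hq.2.symm
  have hplan : roundToPlan p q (Bmat n C γ u v) ∈ transportPlans p q :=
    roundToPlan_mem_transportPlans hp.1 hq.1 (fun i j => (Bmat_pos i j).le) hpq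
  refine ⟨hplan, sub_csInf_image_le (f := cost C) hplan fun P hP => ?_⟩
  rcases lt_or_ge 1 ε' with hε'₁ | hε'₁
  · have : 8 * Cmax < ε := by rwa [hε', one_lt_div (by positivity)] at hε'₁
    linarith [cost_le_cost_add_of_mem_transportPlans hC hCle hp.2 hplan hP]
  have hε'₀ : 0 ≤ ε' := by rw [hε']; positivity
  obtain rfl : pch = smooth (ε' / 8) p := by rw [hpch]; funext i; simp [smooth, div_div]
  obtain rfl : qch = smooth (ε' / 8) q := by rw [hqch]; funext i; simp [smooth, div_div]
  have hΔ := marginalError_le_of_smooth hp.1 hp.2 hq.1 hq.2 (by linarith) (by linarith) hclose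
  have hm := sum_sum_le_of_smooth hp.2 hclose
  have hlog : 0 < Real.log n := Real.log_pos (by exact_mod_cast hn)
  have hγε : γ * Real.log (n * n) = ε / 2 := by
    rw [hγ, ← sq, Real.log_pow]
    field_simp
    ring
  have hγ₀ : 0 < γ := by rw [hγ]; positivity
  have hmain := cost_roundToPlan_Bmat_le (u := u) (v := v) hγ₀ hC hCle hCmaxpos.le hp.1 hq.1 hpq hP
  rw [mul_left_comm, hγε] at hmain
  have hCε' : Cmax * ε' = ε / 8 := by rw [hε']; field_simp
  nlinarith [mul_le_mul_of_nonneg_left hΔ hCmaxpos.le, mul_le_mul_of_nonneg_left hm hε.le]
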